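/- Let π be a k-colored permutation of length n and let π⁻¹ be the k-colored permutation defined by: if π has entry v with color j in position i, then π⁻¹ has entry i with color j in position v (so the square diagram of π⁻¹ is the reflection of the square diagram of π across the main diagonal). Then P̂(π⁻¹) = Q̂(π) and Q̂(π⁻¹) = P̂(π). -/
import Mathlib

namespace KRF

/-- A letter of the alphabet `{1_1, …, 1_k, 2}`:  `one j` stands for the letter `1_j`
(with `1 ≤ j ≤ k` for genuine letters), and `two` stands for the letter `2`. -/
inductive Letter (k : ℕ) : Type where
  | one : ℕ → Letter k
  | two : Letter k
deriving DecidableEq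

/-- A word over the alphabet `{1_1, …, 1_k, 2}`, listed from the leftmost letter to the
rightmost letter. -/
abbrev Word (k : ℕ) := List (Letter k)

/-- The contribution of a letter to the rank: each `1_j` counts `1` and each `2` counts `2`. -/
def Letter.rank {k : ℕ} : Letter k → ℕ
  | .one _ => 1
  | .two => 2

/-- The rank of a word: the sum of its letters. -/
def Word.rank {k : ℕ} (w : Word k) : ℕ := (w.map Letter.rank).sum

/-- The letter `1_j` is valid when `1 ≤ j ≤ k`. -/
def Letter.Valid (k : ℕ) : Letter k → Prop
  | .one j => 1 ≤ j ∧ j ≤ k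
  | .two => True

/-- A genuine word of the Fibonacci poset `Z(k)`: all of its letters are valid. -/
def Word.Valid (k : ℕ) (w : Word k) : Prop := ∀ l ∈ w, l.Valid k

/-- The cover relation of the Fibonacci poset `Z(k)`:  `z` is covered by `w` iff `z` is
obtained from `w` either by changing a `2` into some `1_j` when all letters to the left of
that `2` are `2`'s, or by deleting the leftmost letter of the form `1_j`. -/
def ZCovers (k : ℕ) (z w : Word k) : Prop :=
  (∃ (p s : Word k) (j : ℕ), (∀ l ∈ p, l = Letter.two) ∧ 1 ≤ j ∧ j ≤ k ∧
      w = p ++ Letter.two :: s ∧ z = p ++ Letter.one j :: s) ∨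
  (∃ (p s : Word k) (j : ℕ), (∀ l ∈ p, l = Letter.two) ∧ 1 ≤ j ∧ j ≤ k ∧
      w = p ++ Letter.one j :: s ∧ z = p ++ s)

/-- `c 0 ⋖ c 1 ⋖ ⋯ ⋖ c n` is a saturated chain in `Z(k)` starting at the empty word. -/
def IsZChain (k n : ℕ) (c : ℕ → Word k) : Prop :=
  c 0 = [] ∧ ∀ i, i < n → ZCovers k (c i) (c (i + 1))

end KRF
namespace KRF

/-- A column of a (tiled and filled) `k`-ribbon Fibonacci tableau.
`single h v` is a column of height 1 (shape letter `1_h`) tiled by one `k`-ribbon of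
height `h` filled with the value `v`.
`double ht hb vt vb` is a column of height 2 (shape letter `2`) tiled by a `k`-ribbon of
height `ht` filled with `vt` stacked on top of a `k`-ribbon of height `hb` (always
`hb = k + 1 - ht` for genuine tableaux) filled with `vb`. -/
inductive Col (k : ℕ) : Type where
  | single : ℕ → ℕ → Col k
  | double : ℕ → ℕ → ℕ → ℕ → Col k
deriving DecidableEq

/-- A (tiled, filled) `k`-ribbon Fibonacci tableau: its list of columns, from the leftmost
column to the rightmost one. -/
abbrev Tab (k : ℕ) := List (Col k)

/-- The shape letter of a column. -/
def Col.shape {k : ℕ} : Col k → Letter k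
  | .single h _ => Letter.one h
  | .double _ _ _ _ => Letter.two

/-- The `k`-ribbon Fibonacci shape (a word) underlying a tableau. -/
def Tab.shape {k : ℕ} (T : Tab k) : Word k := T.map Col.shape

/-- The value in the bottom `k`-ribbon of a column. -/
def Col.bottomVal {k : ℕ} : Col k → ℕ
  | .single _ v => v
  | .double _ _ _ vb => vb

/-- The heights occurring in a column are genuine ribbon heights: between `1` and `k`,
and in a column of height 2 the two heights sum to `k + 1`. -/
def Col.HeightsValid (k : ℕ) : Col k → Prop
  | .single h _ => 1 ≤ h ∧ h ≤ k
  | .double ht hb _ _ => 1 ≤ ht ∧ ht ≤ k ∧ hb = k + 1 - ht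

/-- The list of all entries of a tableau (one for each `k`-ribbon). -/
def Tab.entries {k : ℕ} (T : Tab k) : List ℕ :=
  (T.map fun c => match c with
    | Col.single _ v => [v]
    | Col.double _ _ vt vb => [vt, vb]).flatten

/-- The list of the bottom-ribbon values of the columns of a tableau. -/
def Tab.bottoms {k : ℕ} (T : Tab k) : List ℕ := T.map Col.bottomVal

/-- `T` is a standard `k`-ribbon Fibonacci tableau with entries `1, …, n`:
heights are valid, the entries are exactly `1, …, n`,  and the tableau can be built by
placing `n, n-1, …, 1` in order, each new `k`-ribbon being either appended (as a new
rightmost height-1 column) to the shape formed by the `k`-ribbons containing larger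
entries, or stacked on top of a single such `k`-ribbon.  Equivalently (and this is how we
formalize it): the bottom entries strictly decrease from left to right (in particular the
`k`-ribbon containing the leftmost square of the bottom row contains `n`), and in each
column of height 2 the top entry is smaller than the bottom entry. -/
def IsStandardTab (k n : ℕ) (T : Tab k) : Prop :=
  (∀ c ∈ T, Col.HeightsValid k c) ∧
  (Tab.entries T).Perm (List.range' 1 n) ∧
  List.Chain' (fun a b => b < a) (Tab.bottoms T) ∧
  (∀ c ∈ T, ∀ ht hb vt vb, c = Col.double ht hb vt vb → vt < vb)

/-- Updating a (partial) path tableau along one cover step `z ⋖ w` of `Z(k)`, placing the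
value `i` in the `k` new squares of `w` relative to `z`:  if `w` is obtained from `z` by
inserting a letter `1_j` after the prefix of `2`'s, a new height-1 column with a single
ribbon of height `j` filled with `i` is created there; if `w` is obtained from `z` by
changing the letter `1_h` just after the prefix of `2`'s into a `2`, the `k` new squares
of that column form a `k`-ribbon of height `k + 1 - h` filled with `i`, stacked on top of
the already present `k`-ribbon of height `h`. -/
def updateTab (k : ℕ) (i : ℕ) : Word k → Word k → Tab k → Tab k
  | Letter.two :: z', Letter.two :: w', c :: T => c :: updateTab k i z' w' T
  | Letter.one h :: _, Letter.two :: _, Col.single _ v :: T =>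
      Col.double (k + 1 - h) h i v :: T
  | z, Letter.one j :: w', T => if z = w' then Col.single j i :: T else T
  | _, _, T => T

/-- The `k`-ribbon Fibonacci path tableau determined by a saturated chain in `Z(k)`:
for each `i = 1, …, n` the value `i` is placed in the `k` new squares of `c i` relative
to `c (i-1)`. -/
def chainTab (k : ℕ) (c : ℕ → Word k) : ℕ → Tab k
  | 0 => []
  | m + 1 => updateTab k (m + 1) (c m) (c (m + 1)) (chainTab k c m)

/-- `T` is a `k`-ribbon Fibonacci path tableau with entries `1, …, n`: it is obtained
from some saturated chain `∅ = c 0 ⋖ c 1 ⋖ ⋯ ⋖ c n` in `Z(k)` by placing `i`'s in the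
`k` new squares created at the `i`-th step. -/
def IsPathTab (k n : ℕ) (T : Tab k) : Prop :=
  ∃ c : ℕ → Word k, IsZChain k n c ∧ T = chainTab k c n

end KRF
namespace KRF

/-- A `k`-colored permutation of length `n`: a permutation `x_1 x_2 ⋯ x_n` of `{1, …, n}`
(here `x_i = perm i + 1`, using `Fin n` positions and values) together with a color
`color i ∈ {1, …, k}` attached to each entry. -/
structure ColoredPerm (n k : ℕ) : Type where
  perm : Equiv.Perm (Fin n)
  color : Fin n → ℕ
  color_pos : ∀ i, 1 ≤ color i
  color_le : ∀ i, color i ≤ k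

/-- Insertion of a value `x` of color `j` into a `k`-ribbon Fibonacci tableau: compare `x`
with the value `t` in the `k`-ribbon containing the leftmost square of the bottom row.
If the tableau is empty or `x > t`, a new leftmost height-1 column consisting of a single
`k`-ribbon of height `j` filled with `x` is created.  If `x < t`, a `k`-ribbon of height
`j` filled with `x` is placed on top of the `k`-ribbon containing `t` (which is forced to
become a `k`-ribbon of height `k + 1 - j`); if a `k`-ribbon of height `l` filled with `b`
was already on top of the ribbon containing `t`, it is bumped out and the value `b` with
color `l` is inserted recursively into the tableau formed by the columns to the right. -/
def insertVal (k : ℕ) (x j : ℕ) : Tab k → Tab k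
  | [] => [Col.single j x]
  | c :: rest =>
    if Col.bottomVal c < x then Col.single j x :: c :: rest
    else
      match c with
      | Col.single _ v => Col.double j (k + 1 - j) x v :: rest
      | Col.double ht _ vt vb => Col.double j (k + 1 - j) x vb :: insertVal k vt ht rest

/-- The insertion tableau obtained after inserting the first `i` colored entries
`x_1^{j_1}, …, x_i^{j_i}` of the `k`-colored permutation `π` into the empty tableau. -/
def PPartial (k n : ℕ) (π : ColoredPerm n k) (i : ℕ) : Tab k :=
  ((List.finRange n).take i).foldl
    (fun T m => insertVal k ((π.perm m : ℕ) + 1) (π.color m) T) []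

/-- The insertion tableau `P(π)` of a `k`-colored permutation. -/
def PTab (k n : ℕ) (π : ColoredPerm n k) : Tab k := PPartial k n π n

/-- The chain of shapes of the partial insertion tableaux of `π`. -/
def QChain (k n : ℕ) (π : ColoredPerm n k) (i : ℕ) : Word k :=
  Tab.shape (PPartial k n π i)

/-- The recording tableau `Q(π)`: it has the same shape as `P(π)`, and after the `i`-th
insertion the value `i` is placed in the `k` squares by which the shape grew at step `i`. -/
def QTab (k n : ℕ) (π : ColoredPerm n k) : Tab k := chainTab k (QChain k n π) n

end KRF
namespace KRF

/-- Fomin's local growth rule: given the labels `ν` (bottom-left), `μ₁` (top-left),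
`μ₂` (bottom-right) of a unit square and the `X` of the square (`some j` if the square
contains an `X^j`, `none` otherwise), it computes the top-right label `λ`:
(1) if exactly one of `μ₁, μ₂` covers `ν` and the other equals `ν`, then `λ` is the
covering one; (2) if both cover `ν` then `λ = 2ν`; (3) if `μ₁ = ν = μ₂` and the square
contains an `X^j` then `λ = 1_j ν`; (4) if `μ₁ = ν = μ₂` and there is no `X`, `λ = ν`. -/
def growthRule (k : ℕ) (ν μ₁ μ₂ : Word k) (x : Option ℕ) : Word k :=
  if μ₁ = ν ∧ μ₂ = ν then
    match x with
    | some j => Letter.one j :: ν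
    | none => ν
  else if μ₁ = ν then μ₂
  else if μ₂ = ν then μ₁
  else Letter.two :: ν

/-- The content of the unit square in column `c+1` and row `r+1` (1-indexed) of the square
diagram of `π`: `some j` if it contains an `X^j` (i.e. `π` sends position `c+1` to value
`r+1`, colored `j`), and `none` otherwise. -/
def squareX (k n : ℕ) (π : ColoredPerm n k) (c r : ℕ) : Option ℕ :=
  if h : c < n ∧ r < n then
    if (π.perm ⟨c, h.1⟩ : ℕ) = r then some (π.color ⟨c, h.1⟩) else none
  else none

/-- The labels of the corners of the square diagram of `π` produced by Fomin's growth
rules: every corner on the left and bottom edges is labeled by the empty word, and the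
top-right corner of each unit square is computed by the local growth rule. -/
def growth (k n : ℕ) (π : ColoredPerm n k) : ℕ → ℕ → Word k
  | 0, _ => []
  | _ + 1, 0 => []
  | c + 1, r + 1 =>
      growthRule k (growth k n π c r) (growth k n π c (r + 1)) (growth k n π (c + 1) r)
        (squareX k n π c r)
termination_by c r => (c, r)

/-- The saturated chain read bottom-to-top up the right edge of the growth diagram. -/
def PhatChain (k n : ℕ) (π : ColoredPerm n k) (r : ℕ) : Word k := growth k n π n r

/-- The saturated chain read left-to-right along the top edge of the growth diagram. -/
def QhatChain (k n : ℕ) (π : ColoredPerm n k) (c : ℕ) : Word k := growth k n π c n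

/-- The `k`-ribbon Fibonacci path tableau `P̂(π)` obtained from the right edge of the
growth diagram of `π`. -/
def PhatTab (k n : ℕ) (π : ColoredPerm n k) : Tab k := chainTab k (PhatChain k n π) n

/-- The `k`-ribbon Fibonacci path tableau `Q̂(π)` obtained from the top edge of the
growth diagram of `π`. -/
def QhatTab (k n : ℕ) (π : ColoredPerm n k) : Tab k := chainTab k (QhatChain k n π) n

end KRF
namespace KRF

/-- The inverse of a `k`-colored permutation: if `π` has entry `v` with color `j` in
position `i`, then `π⁻¹` has entry `i` with color `j` in position `v`; its square diagram
is the reflection of the square diagram of `π` across the main diagonal. -/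
def ColoredPerm.inv {n k : ℕ} (π : ColoredPerm n k) : ColoredPerm n k where
  perm := π.perm⁻¹
  color := fun v => π.color (π.perm⁻¹ v)
  color_pos := fun v => π.color_pos _
  color_le := fun v => π.color_le _

lemma growthRule_symm (k : ℕ) (ν μ₁ μ₂ : Word k) (x : Option ℕ) :
    growthRule k ν μ₁ μ₂ x = growthRule k ν μ₂ μ₁ x := by
  unfold growthRule
  by_cases h1 : μ₁ = ν <;> by_cases h2 : μ₂ = ν <;> simp [h1, h2]

lemma squareX_inv (k n : ℕ) (π : ColoredPerm n k) (c r : ℕ) :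
    squareX k n (ColoredPerm.inv π) c r = squareX k n π r c := by
  unfold squareX ColoredPerm.inv
  by_cases h : c < n ∧ r < n
  · have h' : r < n ∧ c < n := ⟨h.2, h.1⟩
    rw [dif_pos h, dif_pos h']
    simp only
    by_cases hp : (π.perm⁻¹ ⟨c, h.1⟩ : ℕ) = r
    · have : π.perm⁻¹ ⟨c, h.1⟩ = ⟨r, h.2⟩ := Fin.ext hp
      have h2 : π.perm ⟨r, h'.1⟩ = ⟨c, h.1⟩ := by
        rw [← this]; simp
      rw [if_pos hp, if_pos (by rw [h2]), this]
    · have h2 : (π.perm ⟨r, h'.1⟩ : ℕ) ≠ c := by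
        intro hc
        apply hp
        have : π.perm ⟨r, h'.1⟩ = ⟨c, h.1⟩ := Fin.ext hc
        rw [← this]; simp
      rw [if_neg hp, if_neg h2]
  · have h' : ¬ (r < n ∧ c < n) := fun hh => h ⟨hh.2, hh.1⟩
    rw [dif_neg h, dif_neg h']

lemma growth_bottom (k n : ℕ) (π : ColoredPerm n k) (r : ℕ) :
    growth k n π 0 r = [] := by
  rw [growth]

lemma growth_left (k n : ℕ) (π : ColoredPerm n k) (c : ℕ) :
    growth k n π c 0 = [] := by
  cases c <;> rw [growth]

lemma growth_transpose (k n : ℕ) (π : ColoredPerm n k) :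
    ∀ m c r, c + r ≤ m → growth k n (ColoredPerm.inv π) c r = growth k n π r c := by
  intro m
  induction m with
  | zero =>
    intro c r h
    obtain ⟨rfl, rfl⟩ : c = 0 ∧ r = 0 := by omega
    rw [growth_bottom, growth_left]
  | succ m ih =>
    intro c r h
    match c, r with
    | 0, r => rw [growth_bottom, growth_left]
    | c + 1, 0 => rw [growth_bottom, growth_left]
    | c + 1, r + 1 =>
      rw [growth, growth,
        ih c r (by omega), ih c (r + 1) (by omega), ih (c + 1) r (by omega),
        squareX_inv, growthRule_symm]

/-- For every `k`-colored permutation `π` of length `n`,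
`P̂(π⁻¹) = Q̂(π)` and `Q̂(π⁻¹) = P̂(π)` — both as saturated chains and as the resulting
`k`-ribbon Fibonacci path tableaux. -/
theorem growth_inv (k n : ℕ) (hk : 1 ≤ k) (π : ColoredPerm n k) :
    (∀ i ≤ n, PhatChain k n (ColoredPerm.inv π) i = QhatChain k n π i) ∧
    (∀ i ≤ n, QhatChain k n (ColoredPerm.inv π) i = PhatChain k n π i) ∧
    PhatTab k n (ColoredPerm.inv π) = QhatTab k n π ∧
    QhatTab k n (ColoredPerm.inv π) = PhatTab k n π := by
  have key : ∀ c r, growth k n (ColoredPerm.inv π) c r = growth k n π r c :=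
    fun c r => growth_transpose k n π (c + r) c r le_rfl
  have h1 : ∀ i, PhatChain k n (ColoredPerm.inv π) i = QhatChain k n π i := fun i => key n i
  have h2 : ∀ i, QhatChain k n (ColoredPerm.inv π) i = PhatChain k n π i := fun i => key i n
  refine ⟨fun i _ => h1 i, fun i _ => h2 i, ?_, ?_⟩
  · unfold PhatTab QhatTab
    rw [funext h1]
  · unfold PhatTab QhatTab
    rw [funext h2]

end KRF
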